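/- Let Z₁, Z₂ be jointly standard normal with correlation ρ ∈ [0,1], and let U_i = min{0, Z_i}. Then 0 ≤ Cov(U₁, U₂) ≤ (1 − 2/π)·ρ. -/

import Mathlib

/-!
Write `ρ = sin α` with `α ∈ [0, π/2]`, so that `(Z₁, Z₂)` is the image of a standard Gaussian
vector `(X, Y)` under `(x, y) ↦ (x, sin α * x + cos α * y)`. In polar coordinates
`X = r cos θ`, `Y = r sin θ` one has `sin α * X + cos α * Y = r sin (θ + α)`, and both clipped
variables are positively homogeneous in `r`, so every expectation factors into a Gaussian radial
moment and an elementary integral over `θ`. This gives `E[U₁] = E[U₂] = -1/√(2π)` and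
`E[U₁U₂] = sin α / 4 + (cos α + α sin α) / (2π)`, so both bounds on the covariance reduce to
`0 ≤ cos α + α sin α - 1 ≤ (π/2 - 1) sin α` on `[0, π/2]`.
-/

open MeasureTheory ProbabilityTheory Real Set

lemma integral_Ioi_pow_mul_exp_neg_sq_div_two (k : ℕ) :
    ∫ r in Ioi (0 : ℝ), r ^ k * exp (-r ^ 2 / 2) =
      2 ^ (((k : ℝ) - 1) / 2) * Gamma ((k + 1) / 2) := by
  have hrw : ∀ r ∈ Ioi (0 : ℝ),
      r ^ k * exp (-r ^ 2 / 2) = r ^ (k : ℝ) * exp (-(1 / 2) * r ^ (2 : ℝ)) :=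
    fun r _ => by rw [rpow_natCast, rpow_two]; ring_nf
  rw [setIntegral_congr_fun measurableSet_Ioi hrw,
    integral_rpow_mul_exp_neg_mul_rpow two_pos (by linarith [k.cast_nonneg (α := ℝ)])
      (by norm_num), one_div, inv_rpow zero_le_two, ← rpow_neg zero_le_two,
    show ((k : ℝ) - 1) / 2 = -(-((k : ℝ) + 1) / 2) + -1 by ring, rpow_add two_pos, rpow_neg_one]

lemma integral_Ioi_sq_mul_exp_neg_sq_div_two :
    ∫ r in Ioi (0 : ℝ), r ^ 2 * exp (-r ^ 2 / 2) = √(2 * π) / 2 := by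
  have hΓ : Gamma (3 / 2) = √π / 2 := by
    have h := Real.Gamma_nat_add_one_add_half 0
    norm_num at h
    exact h
  rw [integral_Ioi_pow_mul_exp_neg_sq_div_two, sqrt_mul zero_le_two, sqrt_eq_rpow]
  norm_num [hΓ]
  ring

lemma integral_Ioi_cube_mul_exp_neg_sq_div_two :
    ∫ r in Ioi (0 : ℝ), r ^ 3 * exp (-r ^ 2 / 2) = 2 := by
  rw [integral_Ioi_pow_mul_exp_neg_sq_div_two]
  norm_num

lemma gaussianReal_prod_eq_withDensity :
    (gaussianReal 0 1).prod (gaussianReal 0 1) =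
      volume.withDensity fun p : ℝ × ℝ => gaussianPDF 0 1 p.1 * gaussianPDF 0 1 p.2 := by
  rw [gaussianReal_of_var_ne_zero 0 one_ne_zero, prod_withDensity (measurable_gaussianPDF 0 1)
    (measurable_gaussianPDF 0 1), Measure.volume_eq_prod]

lemma integral_gaussianReal_prod_eq_polar (f : ℝ × ℝ → ℝ) :
    ∫ p, f p ∂(gaussianReal 0 1).prod (gaussianReal 0 1) =
      (2 * π)⁻¹ * ∫ p in Ioi (0 : ℝ) ×ˢ Ioo (-π) π,
        p.1 * exp (-p.1 ^ 2 / 2) * f (p.1 * cos p.2, p.1 * sin p.2) := by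
  rw [gaussianReal_prod_eq_withDensity, integral_withDensity_eq_integral_toReal_smul
    (by fun_prop) (ae_of_all _ fun _ => ENNReal.mul_lt_top gaussianPDF_lt_top gaussianPDF_lt_top),
    ← integral_comp_polarCoord_symm, polarCoord_target, ← integral_const_mul]
  refine setIntegral_congr_fun (measurableSet_Ioi.prod measurableSet_Ioo) fun p _ => ?_
  have hexp : exp (-(p.1 * cos p.2) ^ 2 / 2) * exp (-(p.1 * sin p.2) ^ 2 / 2) =
      exp (-p.1 ^ 2 / 2) := by
    rw [← exp_add]
    congr 1
    linear_combination (-p.1 ^ 2 / 2) * sin_sq_add_cos_sq p.2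
  have hsqrt : (√(2 * π))⁻¹ * (√(2 * π))⁻¹ = (2 * π)⁻¹ := by
    rw [← mul_inv, mul_self_sqrt (by positivity)]
  simp only [polarCoord_symm_apply, smul_eq_mul, ENNReal.toReal_mul, toReal_gaussianPDF,
    gaussianPDFReal, NNReal.coe_one, mul_one, sub_zero]
  rw [← hexp, ← hsqrt]
  ring

lemma integral_gaussianReal_prod_of_homogeneous {f : ℝ × ℝ → ℝ} {k : ℕ}
    (hf : ∀ r > 0, ∀ x y, f (r * x, r * y) = r ^ k * f (x, y)) :
    ∫ p, f p ∂(gaussianReal 0 1).prod (gaussianReal 0 1) =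
      (2 * π)⁻¹ * (∫ r in Ioi (0 : ℝ), r ^ (k + 1) * exp (-r ^ 2 / 2)) *
        ∫ θ in -π..π, f (cos θ, sin θ) := by
  rw [integral_gaussianReal_prod_eq_polar, mul_assoc,
    intervalIntegral.integral_of_le (by linarith [pi_pos]), integral_Ioc_eq_integral_Ioo,
    ← integral_prod_mul, Measure.volume_eq_prod, Measure.prod_restrict]
  congr 1
  refine setIntegral_congr_fun (measurableSet_Ioi.prod measurableSet_Ioo) fun p hp => ?_
  rw [hf p.1 hp.1]
  ring

lemma integral_min_zero_sin_add (α : ℝ) : ∫ θ in -π..π, min 0 (sin (θ + α)) = -2 := by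
  have hcont : Continuous fun u => min 0 (sin u) := by fun_prop
  have hper : Function.Periodic (fun u => min 0 (sin u)) (2 * π) := fun u => by
    simp only [sin_add_two_pi]
  rw [intervalIntegral.integral_comp_add_right (fun u => min 0 (sin u)),
    show π + α = -π + α + 2 * π by ring, hper.intervalIntegral_add_eq (-π + α) (-π),
    show -π + 2 * π = π by ring,
    ← intervalIntegral.integral_add_adjacent_intervals (b := 0) (hcont.intervalIntegrable _ _)
      (hcont.intervalIntegrable _ _)]
  have hneg : ∫ u in -π..0, min 0 (sin u) = ∫ u in -π..0, sin u :=
    intervalIntegral.integral_congr fun u hu => by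
      rw [uIcc_of_le (by linarith [pi_pos])] at hu
      exact min_eq_right (sin_nonpos_of_nonpos_of_neg_pi_le hu.2 hu.1)
  have hpos : ∫ u in (0 : ℝ)..π, min 0 (sin u) = ∫ _ in (0 : ℝ)..π, (0 : ℝ) :=
    intervalIntegral.integral_congr fun u hu => by
      rw [uIcc_of_le pi_pos.le] at hu
      exact min_eq_left (sin_nonneg_of_nonneg_of_le_pi hu.1 hu.2)
  rw [hneg, hpos, integral_sin, intervalIntegral.integral_zero]
  norm_num

lemma integral_cos_mul_sin_add (α a b : ℝ) :
    ∫ θ in a..b, cos θ * sin (θ + α) =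
      sin α * (b - a) / 2 - (cos (2 * b + α) - cos (2 * a + α)) / 4 := by
  have hderiv : ∀ θ : ℝ, HasDerivAt (fun θ => sin α * θ / 2 - cos (2 * θ + α) / 4)
      (cos θ * sin (θ + α)) θ := fun θ => by
    have h := (((hasDerivAt_id θ).const_mul (sin α)).div_const 2).sub
      ((((hasDerivAt_id θ).const_mul 2).add_const α).cos.div_const 4)
    refine h.congr_deriv ?_
    have h₂ := sin_sub (θ + α) θ
    rw [add_sub_cancel_left] at h₂
    rw [id_eq, show 2 * θ + α = θ + (θ + α) by ring, sin_add, h₂]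
    ring
  rw [intervalIntegral.integral_eq_sub_of_hasDerivAt (fun θ _ => hderiv θ)
    ((by fun_prop : Continuous fun θ => cos θ * sin (θ + α)).intervalIntegrable _ _)]
  ring

lemma integral_min_zero_cos_mul_min_zero_sin_add {α : ℝ} (hα₀ : 0 ≤ α) (hα₁ : α ≤ π / 2) :
    ∫ θ in -π..π, min 0 (cos θ) * min 0 (sin (θ + α)) =
      π * sin α / 4 + cos α / 2 + α * sin α / 2 := by
  have hπ := pi_pos
  have hcont : Continuous fun θ => min 0 (cos θ) * min 0 (sin (θ + α)) := by fun_prop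
  -- both factors are negative exactly on `[-π, -π/2] ∪ [π - α, π]`; elsewhere one of them is `0`
  rw [← intervalIntegral.integral_add_adjacent_intervals (a := -π) (b := -(π / 2)) (c := π)
      (hcont.intervalIntegrable _ _) (hcont.intervalIntegrable _ _),
    ← intervalIntegral.integral_add_adjacent_intervals (a := -(π / 2)) (b := π - α) (c := π)
      (hcont.intervalIntegrable _ _) (hcont.intervalIntegrable _ _)]
  have h₁ : ∫ θ in -π..-(π / 2), min 0 (cos θ) * min 0 (sin (θ + α)) =
      ∫ θ in -π..-(π / 2), cos θ * sin (θ + α) :=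
    intervalIntegral.integral_congr fun θ hθ => by
      rw [uIcc_of_le (by linarith)] at hθ
      rw [min_eq_right, min_eq_right]
      · exact sin_nonpos_of_nonpos_of_neg_pi_le (by linarith [hθ.2]) (by linarith [hθ.1])
      · rw [← cos_neg]
        exact cos_nonpos_of_pi_div_two_le_of_le (by linarith [hθ.2]) (by linarith [hθ.1])
  have h₂ : ∫ θ in -(π / 2)..π - α, min 0 (cos θ) * min 0 (sin (θ + α)) =
      ∫ _ in -(π / 2)..π - α, (0 : ℝ) :=
    intervalIntegral.integral_congr fun θ hθ => by
      rw [uIcc_of_le (by linarith)] at hθ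
      rcases le_or_gt θ (π / 2) with h | h
      · rw [min_eq_left (cos_nonneg_of_neg_pi_div_two_le_of_le hθ.1 h), zero_mul]
      · rw [min_eq_left (sin_nonneg_of_nonneg_of_le_pi (by linarith) (by linarith [hθ.2])),
          mul_zero]
  have h₃ : ∫ θ in π - α..π, min 0 (cos θ) * min 0 (sin (θ + α)) =
      ∫ θ in π - α..π, cos θ * sin (θ + α) :=
    intervalIntegral.integral_congr fun θ hθ => by
      rw [uIcc_of_le (by linarith)] at hθ
      rw [min_eq_right, min_eq_right]
      · rw [← neg_nonneg, ← sin_sub_pi]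
        exact sin_nonneg_of_nonneg_of_le_pi (by linarith [hθ.1]) (by linarith [hθ.2])
      · exact cos_nonpos_of_pi_div_two_le_of_le (by linarith [hθ.1]) (by linarith [hθ.2])
  rw [h₁, h₂, h₃, intervalIntegral.integral_zero, integral_cos_mul_sin_add,
    integral_cos_mul_sin_add,
    show 2 * -(π / 2) + α = α - π by ring, cos_sub_pi, show 2 * -π + α = α - 2 * π by ring,
    cos_sub_two_pi, show 2 * π + α = α + 2 * π by ring, cos_add_two_pi,
    show 2 * (π - α) + α = 2 * π - α by ring, cos_two_pi_sub]
  ring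

lemma min_zero_mul_of_nonneg {r : ℝ} (hr : 0 ≤ r) (x : ℝ) : min 0 (r * x) = r * min 0 x := by
  rw [mul_min_of_nonneg _ _ hr, mul_zero]

lemma integral_min_zero_sin_mul_add_cos_mul (α : ℝ) :
    ∫ p, min 0 (sin α * p.1 + cos α * p.2) ∂(gaussianReal 0 1).prod (gaussianReal 0 1) =
      -(√(2 * π))⁻¹ := by
  rw [integral_gaussianReal_prod_of_homogeneous (k := 1) fun r hr x y => by
    rw [pow_one, ← min_zero_mul_of_nonneg hr.le]
    ring_nf]
  simp only [← sin_add, add_comm α, integral_min_zero_sin_add,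
    integral_Ioi_sq_mul_exp_neg_sq_div_two]
  field_simp
  rw [sq_sqrt (by positivity)]

lemma integral_min_zero_mul_min_zero_sin_mul_add_cos_mul {α : ℝ} (hα₀ : 0 ≤ α)
    (hα₁ : α ≤ π / 2) :
    ∫ p, min 0 p.1 * min 0 (sin α * p.1 + cos α * p.2)
        ∂(gaussianReal 0 1).prod (gaussianReal 0 1) =
      sin α / 4 + (cos α + α * sin α) / (2 * π) := by
  rw [integral_gaussianReal_prod_of_homogeneous (k := 2) fun r hr x y => by
    dsimp only
    rw [min_zero_mul_of_nonneg hr.le, show sin α * (r * x) + cos α * (r * y) =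
      r * (sin α * x + cos α * y) by ring, min_zero_mul_of_nonneg hr.le]
    ring]
  simp only [← sin_add, add_comm α, integral_min_zero_cos_mul_min_zero_sin_add hα₀ hα₁,
    integral_Ioi_cube_mul_exp_neg_sq_div_two]
  field_simp
  ring

lemma integral_comp_eq_of_map_eq {Ω α β : Type*} [MeasurableSpace Ω] [MeasurableSpace α]
    [MeasurableSpace β] {P : Measure Ω} {μ : Measure β} {X : Ω → α} {T : β → α}
    (hX : AEMeasurable X P) (hT : Measurable T) (h : P.map X = μ.map T) {g : α → ℝ}
    (hg : Measurable g) :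
    ∫ ω, g (X ω) ∂P = ∫ b, g (T b) ∂μ := by
  rw [← integral_map hX hg.aestronglyMeasurable, h,
    integral_map hT.aemeasurable hg.aestronglyMeasurable]

lemma cos_add_mul_sin_sub_one_nonneg {α : ℝ} (hα₀ : 0 ≤ α) (hα₁ : α ≤ π / 2) :
    0 ≤ cos α + α * sin α - 1 := by
  -- `cos α ≥ cos² α` and `α sin α ≥ sin² α`
  have hcos := cos_nonneg_of_mem_Icc ⟨by linarith [pi_pos], hα₁⟩
  have hsin := sin_nonneg_of_nonneg_of_le_pi hα₀ (by linarith [pi_pos])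
  nlinarith [sin_le hα₀, cos_le_one α, sin_sq_add_cos_sq α]

lemma cos_add_mul_sin_sub_one_le {α : ℝ} (hα₀ : 0 ≤ α) (hα₁ : α ≤ π / 2) :
    cos α + α * sin α - 1 ≤ (π / 2 - 1) * sin α := by
  -- equivalently `cos α + sin α - 1 ≤ (π/2 - α) sin α`; use `cos α ≤ π/2 - α` when `π/2 - α ≤ 1`
  have hsin := sin_nonneg_of_nonneg_of_le_pi hα₀ (by linarith [pi_pos])
  rcases le_or_gt (π / 2 - α) 1 with h | h
  · have hcos : cos α ≤ π / 2 - α := by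
      rw [← sin_pi_div_two_sub]
      exact sin_le (by linarith)
    nlinarith [sin_le_one α]
  · nlinarith [cos_le_one α]

/-- `Cov(U₁, U₂)` for `ρ = sin α`. -/
noncomputable def clippedGaussianCov (α : ℝ) : ℝ := sin α / 4 + (cos α + α * sin α - 1) / (2 * π)

lemma clippedGaussianCov_nonneg {α : ℝ} (hα₀ : 0 ≤ α) (hα₁ : α ≤ π / 2) :
    0 ≤ clippedGaussianCov α :=
  add_nonneg (div_nonneg (sin_nonneg_of_nonneg_of_le_pi hα₀ (by linarith [pi_pos])) zero_le_four)
    (div_nonneg (cos_add_mul_sin_sub_one_nonneg hα₀ hα₁) (by positivity))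

lemma clippedGaussianCov_le {α : ℝ} (hα₀ : 0 ≤ α) (hα₁ : α ≤ π / 2) :
    clippedGaussianCov α ≤ (1 - 2 / π) * sin α := by
  have hsin := sin_nonneg_of_nonneg_of_le_pi hα₀ (by linarith [pi_pos])
  calc clippedGaussianCov α ≤ sin α / 4 + (π / 2 - 1) * sin α / (2 * π) := by
        unfold clippedGaussianCov
        gcongr
        exact cos_add_mul_sin_sub_one_le hα₀ hα₁
    _ = (1 - 2 / π) * sin α - (π - 3) * sin α / (2 * π) := by
        field_simp
        ring
    _ ≤ (1 - 2 / π) * sin α :=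
        sub_le_self _ (div_nonneg (mul_nonneg (by linarith [pi_gt_three]) hsin) (by positivity))

theorem stmt16_general {Ω : Type*} [MeasurableSpace Ω] (Pm : Measure Ω)
    (Z₁ Z₂ : Ω → ℝ) (h₁ : Measurable Z₁) (h₂ : Measurable Z₂)
    (ρ : ℝ) (hρ0 : 0 ≤ ρ) (hρ1 : ρ ≤ 1)
    (hlaw : Measure.map (fun ω => (Z₁ ω, Z₂ ω)) Pm =
      Measure.map (fun p : ℝ × ℝ => (p.1, ρ * p.1 + Real.sqrt (1 - ρ ^ 2) * p.2))
        ((gaussianReal 0 1).prod (gaussianReal 0 1)))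
    (cov : ℝ)
    (hcov : cov = (∫ ω, min 0 (Z₁ ω) * min 0 (Z₂ ω) ∂Pm) -
      (∫ ω, min 0 (Z₁ ω) ∂Pm) * (∫ ω, min 0 (Z₂ ω) ∂Pm)) :
    0 ≤ cov ∧ cov ≤ (1 - 2 / Real.pi) * ρ := by
  obtain ⟨α, ⟨hα₀, hα₁⟩, rfl⟩ : ∃ α ∈ Icc 0 (π / 2), sin α = ρ :=
    ⟨arcsin ρ, ⟨arcsin_nonneg.2 hρ0, arcsin_le_pi_div_two ρ⟩, sin_arcsin (by linarith) hρ1⟩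
  rw [← cos_eq_sqrt_one_sub_sin_sq (by linarith [pi_pos]) hα₁] at hlaw
  have hX : AEMeasurable (fun ω => (Z₁ ω, Z₂ ω)) Pm := (h₁.prodMk h₂).aemeasurable
  have hT : Measurable fun p : ℝ × ℝ => (p.1, sin α * p.1 + cos α * p.2) := by fun_prop
  have hU₁₂ : ∫ ω, min 0 (Z₁ ω) * min 0 (Z₂ ω) ∂Pm =
      sin α / 4 + (cos α + α * sin α) / (2 * π) :=
    (integral_comp_eq_of_map_eq hX hT hlaw (g := fun p => min 0 p.1 * min 0 p.2)
      (by fun_prop)).trans (integral_min_zero_mul_min_zero_sin_mul_add_cos_mul hα₀ hα₁)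
  have hU₁ : ∫ ω, min 0 (Z₁ ω) ∂Pm = -(√(2 * π))⁻¹ :=
    (integral_comp_eq_of_map_eq hX hT hlaw (g := fun p => min 0 p.1) (by fun_prop)).trans
      (by simpa using integral_min_zero_sin_mul_add_cos_mul (π / 2))
  have hU₂ : ∫ ω, min 0 (Z₂ ω) ∂Pm = -(√(2 * π))⁻¹ :=
    (integral_comp_eq_of_map_eq hX hT hlaw (g := fun p => min 0 p.2) (by fun_prop)).trans
      (integral_min_zero_sin_mul_add_cos_mul α)
  have hcov' : cov = clippedGaussianCov α := by
    rw [hcov, hU₁₂, hU₁, hU₂, neg_mul_neg, ← mul_inv, mul_self_sqrt (by positivity),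
      clippedGaussianCov]
    ring
  exact hcov' ▸ ⟨clippedGaussianCov_nonneg hα₀ hα₁, clippedGaussianCov_le hα₀ hα₁⟩

/-- Covariance bound for clipped jointly-normal variables:
`0 ≤ Cov(min{0,Z₁}, min{0,Z₂}) ≤ (1 − 2/π)·ρ`. -/
theorem stmt16 {Ω : Type*} [MeasurableSpace Ω] (Pm : Measure Ω) [IsProbabilityMeasure Pm]
    (Z₁ Z₂ : Ω → ℝ) (h₁ : Measurable Z₁) (h₂ : Measurable Z₂)
    (ρ : ℝ) (hρ0 : 0 ≤ ρ) (hρ1 : ρ ≤ 1)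
    (hlaw : Measure.map (fun ω => (Z₁ ω, Z₂ ω)) Pm =
      Measure.map (fun p : ℝ × ℝ => (p.1, ρ * p.1 + Real.sqrt (1 - ρ ^ 2) * p.2))
        ((gaussianReal 0 1).prod (gaussianReal 0 1)))
    (cov : ℝ)
    (hcov : cov = (∫ ω, min 0 (Z₁ ω) * min 0 (Z₂ ω) ∂Pm) -
      (∫ ω, min 0 (Z₁ ω) ∂Pm) * (∫ ω, min 0 (Z₂ ω) ∂Pm)) :
    0 ≤ cov ∧ cov ≤ (1 - 2 / Real.pi) * ρ :=
  stmt16_general Pm Z₁ Z₂ h₁ h₂ ρ hρ0 hρ1 hlaw cov hcov
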